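/- Let K be a field of characteristic 0 and let j ≥ 2, s ≥ 0 be integers. Suppose Φ : m0 × m0 → m0 is an alternating bilinear map such that: (i) Φ(e_1, x) = 0 for all x; (ii) Φ is homogeneous of weight s, i.e. Φ(e_a, e_b) ∈ span{e_{a+b+s}} for all a, b ≥ 2; (iii) dΦ = 0 (Φ is a 2-cocycle with adjoint coefficients); (iv) Φ(e_j, e_{j+1}) = e_{2j+1+s} and Φ(e_k, e_{k+1}) = 0 for all k ≥ 2 with k ≠ j. Then Φ = Ψ_{j,s}, i.e. Φ(e_k, e_m) = (−1)^{j−k} binom(m−j−1, j−k) e_{k+m+s} for 2 ≤ k ≤ j < m with k + m ≥ 2j + 1, and Φ(e_k, e_m) = 0 for all other pairs k < m. -/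

import Mathlib

/-!
The cocycle identity applied to `(e₁, e_k, e_m)`, together with `Φ(e₁, ·) = 0` and
`⁅e_k, e_m⁆ = 0`, says that `ad e₁` acts as a derivation on the values of `Φ`:
`Φ(e_k, e_{m+1}) = ⁅e₁, Φ(e_k, e_m)⁆ - Φ(e_{k+1}, e_m)`. Hence all values `Φ(e_k, e_m)`, `k < m`,
are determined by induction on `m` from the values on the superdiagonal `m = k + 1`, and the
coefficients of `Ψ_{j,s}` satisfy the same Pascal-type recurrence with the same initial values.
-/

/-- The basis vector `e n`, extended by `0` to the junk index `n = 0`. -/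
noncomputable def E {K g : Type*} [Field K] [AddCommGroup g] [Module K g]
    (e : Module.Basis ℕ+ K g) (n : ℕ) : g :=
  if h : 0 < n then e ⟨n, h⟩ else 0

/-- The value of the cocycle `Ψ_{j,s}` on the pair of basis vectors `(e k, e m)`:
`Ψ_{j,s}(e_k, e_m) = (-1)^{j-k} C(m-j-1, j-k) e_{k+m+s}` for `2 ≤ k ≤ j < m` with
`k + m ≥ 2j + 1`, extended antisymmetrically, and `0` on all other pairs. -/
noncomputable def psiVal {K g : Type*} [Field K] [AddCommGroup g] [Module K g]
    (e : Module.Basis ℕ+ K g) (j s : ℕ) (k m : ℕ+) : g :=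
  if 2 ≤ (k : ℕ) ∧ (k : ℕ) ≤ j ∧ j < (m : ℕ) ∧ 2 * j + 1 ≤ (k : ℕ) + (m : ℕ) then
    ((-1 : K) ^ (j - (k : ℕ)) * (((m : ℕ) - j - 1).choose (j - (k : ℕ)) : K)) •
      E e ((k : ℕ) + (m : ℕ) + s)
  else if 2 ≤ (m : ℕ) ∧ (m : ℕ) ≤ j ∧ j < (k : ℕ) ∧ 2 * j + 1 ≤ (k : ℕ) + (m : ℕ) then
    -(((-1 : K) ^ (j - (m : ℕ)) * (((k : ℕ) - j - 1).choose (j - (m : ℕ)) : K)) •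
      E e ((k : ℕ) + (m : ℕ) + s))
  else 0

/-- The bilinear map `Ψ_{j,s} : g × g → g`, extended from its values `psiVal` on pairs of
basis vectors. -/
noncomputable def Psi {K g : Type*} [Field K] [AddCommGroup g] [Module K g]
    (e : Module.Basis ℕ+ K g) (j s : ℕ) : g →ₗ[K] g →ₗ[K] g :=
  Module.Basis.constr e K fun k => Module.Basis.constr e K fun m => psiVal e j s k m

open Module

def psiCoeff (K : Type*) [Field K] (j k m : ℕ) : K :=
  if 2 ≤ k ∧ k ≤ j ∧ j < m ∧ 2 * j + 1 ≤ k + m then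
    (-1 : K) ^ (j - k) * ((m - j - 1).choose (j - k) : K)
  else 0

section Coeff

variable (K : Type*) [Field K] (j : ℕ)

lemma psiCoeff_self (k : ℕ) : psiCoeff K j k k = 0 :=
  if_neg (by omega)

lemma psiCoeff_succ_self {k : ℕ} (hk : 2 ≤ k) :
    psiCoeff K j k (k + 1) = if k = j then 1 else 0 := by
  rcases eq_or_ne k j with rfl | hkj
  · rw [psiCoeff, if_pos (by omega), if_pos rfl]
    simp
  · rw [psiCoeff, if_neg (by omega), if_neg hkj]

lemma psiCoeff_succ_right {k m : ℕ} (hk : 2 ≤ k) (hkm : k + 1 ≤ m) :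
    psiCoeff K j k (m + 1) = psiCoeff K j k m - psiCoeff K j (k + 1) m := by
  unfold psiCoeff
  split_ifs <;> first | (exfalso; omega) | skip
  · rw [show j - k = j - (k + 1) + 1 by omega, show m + 1 - j - 1 = m - j - 1 + 1 by omega,
      Nat.choose_succ_succ]
    push_cast
    ring
  · simp [show j - k = 0 by omega]
  · rw [show m + 1 - j - 1 = j - (k + 1) + 1 by omega, show m - j - 1 = j - (k + 1) by omega,
      show j - k = j - (k + 1) + 1 by omega, Nat.choose_self, Nat.choose_self]
    push_cast
    ring
  · simp

end Coeff

section PsiVal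

variable {K V : Type*} [Field K] [AddCommGroup V] [Module K V] (e : Basis ℕ+ K V) (j s : ℕ)

lemma E_coe (n : ℕ+) : E e n = e n := by
  rw [E, dif_pos n.pos]
  rfl

lemma psiVal_of_le {k m : ℕ+} (hkm : k ≤ m) :
    psiVal e j s k m = psiCoeff K j k m • E e (k + m + s) := by
  have hkm : (k : ℕ) ≤ m := hkm
  unfold psiVal psiCoeff
  split_ifs <;> first | (exfalso; omega) | simp

lemma psiVal_swap (k m : ℕ+) : psiVal e j s m k = -psiVal e j s k m := by
  unfold psiVal
  rw [add_comm (m : ℕ) k]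
  split_ifs <;> first | (exfalso; omega) | simp

end PsiVal

lemma LinearMap.apply_lie_right_of_cocycle {R L : Type*} [CommRing R] [LieRing L]
    [LieAlgebra R L] {Φ : L →ₗ[R] L →ₗ[R] L} (hΦ : Φ.IsAlt)
    (hcocycle : ∀ x y z : L,
      ⁅x, Φ y z⁆ - ⁅y, Φ x z⁆ + ⁅z, Φ x y⁆ - Φ ⁅x, y⁆ z + Φ ⁅x, z⁆ y - Φ ⁅y, z⁆ x = 0)
    {a x y : L} (ha : ∀ z, Φ a z = 0) (hxy : ⁅x, y⁆ = 0) :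
    Φ x ⁅a, y⁆ = ⁅a, Φ x y⁆ - Φ ⁅a, x⁆ y := by
  have h := hcocycle a x y
  rw [ha, ha, hxy, map_zero, LinearMap.zero_apply, lie_zero, lie_zero, sub_zero, add_zero,
    sub_zero, ← hΦ.neg x, ← sub_eq_add_neg, sub_eq_zero] at h
  exact h.symm

section Filiform

variable {K L : Type*} [Field K] [LieRing L] [LieAlgebra K L] (e : Basis ℕ+ K L)

lemma lie_e_one_E (hm0a : ∀ i : ℕ+, 2 ≤ i → ⁅e 1, e i⁆ = e (i + 1)) {n : ℕ} (hn : 2 ≤ n) :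
    ⁅e 1, E e n⁆ = E e (n + 1) := by
  lift n to ℕ+ using (by omega)
  rw [E_coe, hm0a n hn, ← E_coe]
  rfl

lemma lie_E_E (hm0b : ∀ i j : ℕ+, 2 ≤ i → 2 ≤ j → ⁅e i, e j⁆ = 0) {k m : ℕ}
    (hk : 2 ≤ k) (hm : 2 ≤ m) : ⁅E e k, E e m⁆ = 0 := by
  lift k to ℕ+ using (by omega)
  lift m to ℕ+ using (by omega)
  rw [E_coe, E_coe]
  exact hm0b k m hk hm

variable {e} {Φ : L →ₗ[K] L →ₗ[K] L}

lemma apply_E_E_succ_right (hm0a : ∀ i : ℕ+, 2 ≤ i → ⁅e 1, e i⁆ = e (i + 1))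
    (hm0b : ∀ i j : ℕ+, 2 ≤ i → 2 ≤ j → ⁅e i, e j⁆ = 0) (hΦ : Φ.IsAlt)
    (h1 : ∀ x : L, Φ (e 1) x = 0)
    (hcocycle : ∀ x y z : L,
      ⁅x, Φ y z⁆ - ⁅y, Φ x z⁆ + ⁅z, Φ x y⁆ - Φ ⁅x, y⁆ z + Φ ⁅x, z⁆ y - Φ ⁅y, z⁆ x = 0)
    {k m : ℕ} (hk : 2 ≤ k) (hm : 2 ≤ m) :
    Φ (E e k) (E e (m + 1)) = ⁅e 1, Φ (E e k) (E e m)⁆ - Φ (E e (k + 1)) (E e m) := by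
  rw [← lie_e_one_E e hm0a hm, ← lie_e_one_E e hm0a hk]
  exact Φ.apply_lie_right_of_cocycle hΦ hcocycle h1 (lie_E_E e hm0b hk hm)

lemma apply_E_E_eq_psiCoeff_smul (hm0a : ∀ i : ℕ+, 2 ≤ i → ⁅e 1, e i⁆ = e (i + 1))
    (hm0b : ∀ i j : ℕ+, 2 ≤ i → 2 ≤ j → ⁅e i, e j⁆ = 0) (hΦ : Φ.IsAlt)
    (h1 : ∀ x : L, Φ (e 1) x = 0)
    (hcocycle : ∀ x y z : L,
      ⁅x, Φ y z⁆ - ⁅y, Φ x z⁆ + ⁅z, Φ x y⁆ - Φ ⁅x, y⁆ z + Φ ⁅x, z⁆ y - Φ ⁅y, z⁆ x = 0)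
    {j s : ℕ} (hval₁ : Φ (E e j) (E e (j + 1)) = E e (2 * j + 1 + s))
    (hval₂ : ∀ k : ℕ, 2 ≤ k → k ≠ j → Φ (E e k) (E e (k + 1)) = 0) {k m : ℕ} (hk : 2 ≤ k)
    (hkm : k ≤ m) : Φ (E e k) (E e m) = psiCoeff K j k m • E e (k + m + s) := by
  induction m generalizing k with
  | zero => omega
  | succ m ih =>
    obtain hkm | rfl | rfl : k + 1 ≤ m ∨ k = m ∨ k = m + 1 := by omega
    · rw [apply_E_E_succ_right hm0a hm0b hΦ h1 hcocycle hk (by omega), ih hk (by omega),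
        ih (by omega) hkm, lie_smul, lie_e_one_E e hm0a (by omega), psiCoeff_succ_right K j hk hkm,
        sub_smul, show k + m + s + 1 = k + (m + 1) + s by omega,
        show k + 1 + m + s = k + (m + 1) + s by omega]
    · rw [psiCoeff_succ_self K j hk]
      split_ifs with hkj
      · subst hkj
        rw [one_smul, hval₁, show k + (k + 1) = 2 * k + 1 by omega]
      · rw [hval₂ k hk hkj, zero_smul]
    · rw [hΦ, psiCoeff_self, zero_smul]

end Filiform

theorem psi_js_unique_general (K g : Type*) [Field K]
    [LieRing g] [LieAlgebra K g]
    (e : Module.Basis ℕ+ K g)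
    (hm0a : ∀ i : ℕ+, 2 ≤ i → ⁅e 1, e i⁆ = e (i + 1))
    (hm0b : ∀ i j : ℕ+, 2 ≤ i → 2 ≤ j → ⁅e i, e j⁆ = 0)
    (j s : ℕ)
    (Φ : g →ₗ[K] g →ₗ[K] g)
    (halt : ∀ x : g, Φ x x = 0)
    (h1 : ∀ x : g, Φ (e 1) x = 0)
    (hcocycle : ∀ x y z : g,
      ⁅x, Φ y z⁆ - ⁅y, Φ x z⁆ + ⁅z, Φ x y⁆ - Φ ⁅x, y⁆ z + Φ ⁅x, z⁆ y - Φ ⁅y, z⁆ x = 0)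
    (hval₁ : Φ (E e j) (E e (j + 1)) = E e (2 * j + 1 + s))
    (hval₂ : ∀ k : ℕ, 2 ≤ k → k ≠ j → Φ (E e k) (E e (k + 1)) = 0) :
    Φ = Psi e j s := by
  refine Basis.ext e fun k => Basis.ext e fun m => ?_
  rw [Psi, Basis.constr_basis, Basis.constr_basis]
  wlog hkm : k ≤ m generalizing k m
  · rw [← LinearMap.IsAlt.neg halt, this m k (le_of_not_ge hkm), psiVal_swap, neg_neg]
  rw [psiVal_of_le e j s hkm]
  rcases (one_le (a := k)).eq_or_lt with rfl | hk
  · rw [h1, psiCoeff, if_neg (by simp), zero_smul]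
  rw [← E_coe, ← E_coe]
  exact apply_E_E_eq_psiCoeff_smul hm0a hm0b halt h1 hcocycle hval₁ hval₂ hk hkm

/-- Let `K` be a field of characteristic 0 and `j ≥ 2`, `s ≥ 0` integers.
Suppose `Φ : m0 × m0 → m0` is an alternating bilinear map on `m0` (a Lie algebra with
basis `e 1, e 2, …` and only nonzero brackets `⁅e 1, e i⁆ = e (i+1)`, `i ≥ 2`) such that:
(i) `Φ(e 1, x) = 0` for all `x`;
(ii) `Φ` is homogeneous of weight `s`: `Φ(e_a, e_b) ∈ span {e_{a+b+s}}` for all `a, b ≥ 2`;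
(iii) `dΦ = 0` (`Φ` is a 2-cocycle with adjoint coefficients);
(iv) `Φ(e_j, e_{j+1}) = e_{2j+1+s}` and `Φ(e_k, e_{k+1}) = 0` for all `k ≥ 2`, `k ≠ j`.
Then `Φ = Ψ_{j,s}`. -/
theorem psi_js_unique (K g : Type*) [Field K] [CharZero K]
    [LieRing g] [LieAlgebra K g]
    (e : Module.Basis ℕ+ K g)
    (hm0a : ∀ i : ℕ+, 2 ≤ i → ⁅e 1, e i⁆ = e (i + 1))
    (hm0b : ∀ i j : ℕ+, 2 ≤ i → 2 ≤ j → ⁅e i, e j⁆ = 0)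
    (j s : ℕ) (hj : 2 ≤ j)
    (Φ : g →ₗ[K] g →ₗ[K] g)
    (halt : ∀ x : g, Φ x x = 0)
    (h1 : ∀ x : g, Φ (e 1) x = 0)
    (hw : ∀ a b : ℕ+, 2 ≤ a → 2 ≤ b →
      Φ (e a) (e b) ∈ Submodule.span K {E e ((a : ℕ) + (b : ℕ) + s)})
    (hcocycle : ∀ x y z : g,
      ⁅x, Φ y z⁆ - ⁅y, Φ x z⁆ + ⁅z, Φ x y⁆ - Φ ⁅x, y⁆ z + Φ ⁅x, z⁆ y - Φ ⁅y, z⁆ x = 0)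
    (hval₁ : Φ (E e j) (E e (j + 1)) = E e (2 * j + 1 + s))
    (hval₂ : ∀ k : ℕ, 2 ≤ k → k ≠ j → Φ (E e k) (E e (k + 1)) = 0) :
    Φ = Psi e j s :=
  psi_js_unique_general K g e hm0a hm0b j s Φ halt h1 hcocycle hval₁ hval₂
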